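/- Let y : J → ℝ be a differentiable function on an open interval J ⊆ ℝ∖{0,1} satisfying y'(x) = −y(x)(y(x)−1)/(x(x−1)) for all x ∈ J, and suppose Δ(x,y(x)) ≠ 0 on J. Then y is twice differentiable and satisfies equation (24): y''(x) + [x(x−1)·P_y]/Δ·(y'(x))³ + [(P_x − Q_y)x² + (Q_y − P_x − 2P)x + P_y·y² − (2P + P_y)·y + 2P]/Δ·(y'(x))² + [−Q_x·x² + (Q_x + 2Q)x + (P_x − Q_y)y² + (2Q − P_x + Q_y)y − 2Q]/Δ·y'(x) + [y(1−y)·Q_x]/Δ = 0 for all x ∈ J, where all coefficient functions are evaluated at (x, y(x)). -/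

import Mathlib

/-!
Multiplied by `Δ`, the left side of (24) becomes
`Δ y'' + (x(x-1) y' + y(y-1)) (P_y y'² + (P_x - Q_y) y' - Q_x) - 2 (x+y-1) y' (P y' - Q)`.
Along a solution of the auxiliary equation the middle term vanishes and
`Δ = -x(x-1) (P y' - Q)`, so (24) reduces to `y'' = -2 (x+y-1) y' / (x(x-1))`,
which is exactly what differentiating the auxiliary equation gives.
-/

/-- Partial derivative with respect to the first argument. -/
noncomputable def pdx (F : ℝ × ℝ → ℝ) (p : ℝ × ℝ) : ℝ := fderiv ℝ F p (1, 0)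

/-- Partial derivative with respect to the second argument. -/
noncomputable def pdy (F : ℝ × ℝ → ℝ) (p : ℝ × ℝ) : ℝ := fderiv ℝ F p (0, 1)

/-- `Δ(x,y) = y²P − yP + x²Q − xQ`. -/
noncomputable def Delta (P Q : ℝ × ℝ → ℝ) (p : ℝ × ℝ) : ℝ :=
  p.2 ^ 2 * P p - p.2 * P p + p.1 ^ 2 * Q p - p.1 * Q p

/-- The left-hand side of equation (24), the second-order ODE cubic in the first
derivative associated with the planar system `dy/dx = Q/P`, evaluated with
`y = y(x)`, `y' = y'(x)`, `y'' = y''(x)`. -/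
noncomputable def eq24LHS (P Q : ℝ × ℝ → ℝ) (x yx y1 y2 : ℝ) : ℝ :=
  y2
    + (x * (x - 1) * pdy P (x, yx)) / Delta P Q (x, yx) * y1 ^ 3
    + ((pdx P (x, yx) - pdy Q (x, yx)) * x ^ 2
        + (pdy Q (x, yx) - pdx P (x, yx) - 2 * P (x, yx)) * x
        + pdy P (x, yx) * yx ^ 2
        - (2 * P (x, yx) + pdy P (x, yx)) * yx
        + 2 * P (x, yx)) / Delta P Q (x, yx) * y1 ^ 2
    + (-(pdx Q (x, yx)) * x ^ 2
        + (pdx Q (x, yx) + 2 * Q (x, yx)) * x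
        + (pdx P (x, yx) - pdy Q (x, yx)) * yx ^ 2
        + (2 * Q (x, yx) - pdx P (x, yx) + pdy Q (x, yx)) * yx
        - 2 * Q (x, yx)) / Delta P Q (x, yx) * y1
    + (yx * (1 - yx) * pdx Q (x, yx)) / Delta P Q (x, yx)

noncomputable def auxSlope (x y : ℝ) : ℝ := -y * (y - 1) / (x * (x - 1))

theorem mul_auxSlope_add_eq_zero {x : ℝ} (y : ℝ) (hx0 : x ≠ 0) (hx1 : x - 1 ≠ 0) :
    x * (x - 1) * auxSlope x y + y * (y - 1) = 0 := by
  unfold auxSlope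
  field_simp
  ring

theorem Delta_mul_eq24LHS (P Q : ℝ × ℝ → ℝ) {x yx : ℝ} (y1 y2 : ℝ)
    (hΔ : Delta P Q (x, yx) ≠ 0) :
    Delta P Q (x, yx) * eq24LHS P Q x yx y1 y2 =
      Delta P Q (x, yx) * y2
        + (x * (x - 1) * y1 + yx * (yx - 1))
          * (pdy P (x, yx) * y1 ^ 2 + (pdx P (x, yx) - pdy Q (x, yx)) * y1 - pdx Q (x, yx))
        - 2 * (x + yx - 1) * y1 * (P (x, yx) * y1 - Q (x, yx)) := by
  unfold eq24LHS
  generalize Delta P Q (x, yx) = D at hΔ ⊢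
  field_simp
  ring

theorem eq24LHS_eq_zero_of_auxiliary (P Q : ℝ × ℝ → ℝ) {x yx y1 : ℝ}
    (hx0 : x ≠ 0) (hx1 : x - 1 ≠ 0) (hΔ : Delta P Q (x, yx) ≠ 0)
    (hy1 : x * (x - 1) * y1 + yx * (yx - 1) = 0) :
    eq24LHS P Q x yx y1 (-2 * (x + yx - 1) * y1 / (x * (x - 1))) = 0 := by
  have hΔ_eq : Delta P Q (x, yx) = -(x * (x - 1)) * (P (x, yx) * y1 - Q (x, yx)) := by
    have hw : yx * (yx - 1) = -(x * (x - 1) * y1) := by linarith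
    unfold Delta
    linear_combination P (x, yx) * hw
  apply mul_left_cancel₀ hΔ
  rw [Delta_mul_eq24LHS P Q _ _ hΔ, hy1, mul_zero, hΔ_eq]
  field_simp
  ring

theorem hasDerivAt_auxSlope_comp {y : ℝ → ℝ} {x : ℝ} (hy : HasDerivAt y (auxSlope x (y x)) x)
    (hx0 : x ≠ 0) (hx1 : x - 1 ≠ 0) :
    HasDerivAt (fun t => auxSlope t (y t))
      (-2 * (x + y x - 1) * auxSlope x (y x) / (x * (x - 1))) x := by
  set s := auxSlope x (y x)
  have h : HasDerivAt (fun t => auxSlope t (y t))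
      (((-s * (y x - 1) + -y x * s) * (x * (x - 1)) - -y x * (y x - 1) * (1 * (x - 1) + x * 1))
        / (x * (x - 1)) ^ 2) x :=
    (hy.neg.mul (hy.sub_const 1)).div ((hasDerivAt_id x).mul ((hasDerivAt_id x).sub_const 1))
      (mul_ne_zero hx0 hx1)
  convert h using 1
  have hs : -y x * (y x - 1) = x * (x - 1) * s := by
    linear_combination -mul_auxSlope_add_eq_zero (y x) hx0 hx1
  rw [hs]
  field_simp
  ring

theorem hasDerivAt_deriv_of_forall_hasDerivAt {J : Set ℝ} (hJ : IsOpen J) {f y : ℝ → ℝ}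
    (hy : ∀ t ∈ J, HasDerivAt y (f t) t) {x a : ℝ} (hx : x ∈ J) (hf : HasDerivAt f a x) :
    HasDerivAt (deriv y) a x :=
  hf.congr_of_eventuallyEq <| Filter.eventually_of_mem (hJ.mem_nhds hx) fun t ht => (hy t ht).deriv

theorem stmt_10_general (P Q : ℝ × ℝ → ℝ)
    (J : Set ℝ) (hJ : IsOpen J)
    (hJ01 : ∀ x ∈ J, x ≠ 0 ∧ x ≠ 1)
    (y : ℝ → ℝ)
    (hy : ∀ x ∈ J, HasDerivAt y (-(y x) * (y x - 1) / (x * (x - 1))) x)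
    (hΔ : ∀ x ∈ J, Delta P Q (x, y x) ≠ 0) :
    ∀ x ∈ J, ∃ y2 : ℝ,
      HasDerivAt (deriv y) y2 x ∧
      eq24LHS P Q x (y x) (deriv y x) y2 = 0 := by
  intro x hx
  have hx0 : x ≠ 0 := (hJ01 x hx).1
  have hx1 : x - 1 ≠ 0 := sub_ne_zero.mpr (hJ01 x hx).2
  have hyx : HasDerivAt y (auxSlope x (y x)) x := hy x hx
  refine ⟨_, hasDerivAt_deriv_of_forall_hasDerivAt hJ hy hx
    (hasDerivAt_auxSlope_comp hyx hx0 hx1), ?_⟩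
  rw [hyx.deriv]
  exact eq24LHS_eq_zero_of_auxiliary P Q hx0 hx1 (hΔ x hx) (mul_auxSlope_add_eq_zero _ hx0 hx1)

/-- Every solution of the Petrovsky–Landis auxiliary equation
`dy/dx = −y(y−1)/(x(x−1))` on an open interval avoiding `0, 1` (with `Δ ≠ 0`
along it) is twice differentiable and satisfies equation (24). -/
theorem stmt_10 (P Q : ℝ × ℝ → ℝ) (hP : ContDiff ℝ 1 P) (hQ : ContDiff ℝ 1 Q)
    (J : Set ℝ) (hJ : IsOpen J) (hJconn : IsPreconnected J)
    (hJ01 : ∀ x ∈ J, x ≠ 0 ∧ x ≠ 1)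
    (y : ℝ → ℝ)
    (hy : ∀ x ∈ J, HasDerivAt y (-(y x) * (y x - 1) / (x * (x - 1))) x)
    (hΔ : ∀ x ∈ J, Delta P Q (x, y x) ≠ 0) :
    ∀ x ∈ J, ∃ y2 : ℝ,
      HasDerivAt (deriv y) y2 x ∧
      eq24LHS P Q x (y x) (deriv y x) y2 = 0 :=
  stmt_10_general P Q J hJ hJ01 y hy hΔ
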